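/- arXiv:1809.06099 — 2 statements merged into one kernel-verified Lean document; each statement's English description precedes it below -/
import Mathlib

section
/- Let κ be a continuous and concordance order preserving functional on d-dimensional copulas and let 𝒟 be a nonempty compact set of copulas. Then m(κ,𝒟) contains at least one minimal element of (𝒟,⪯); in particular, the set m(κ,𝒞) of minimizers of κ over all d-dimensional copulas contains at least one minimal copula. -/
open MeasureTheory unitInterval

/-- The unit cube `[0,1]^d`, modelled as functions `Fin d → [0,1]`. -/
abbrev Cube (d : ℕ) : Type := Fin d → unitInterval

/-- `η_K(u,v)`: the vector whose `k`-th coordinate is `v k` if `k ∈ K` and `u k` otherwise. -/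
def etaK {d : ℕ} (K : Finset (Fin d)) (u v : Cube d) : Cube d :=
  fun k => if k ∈ K then v k else u k

/-- `C` is a `d`-dimensional copula. -/
def IsCopula {d : ℕ} (C : Cube d → ℝ) : Prop :=
  (∀ u v : Cube d, u ≤ v →
      0 ≤ ∑ K : Finset (Fin d), (-1 : ℝ) ^ (d - K.card) * C (etaK K u v)) ∧
  (∀ k : Fin d, ∀ u : Cube d, C (etaK {k} u 0) = 0) ∧
  (∀ k : Fin d, ∀ u : Cube d, C (etaK {k} 1 u) = (u k : ℝ))

/-- The reflection `ν_K`, i.e. the composition of the commuting reflections `ν_k`, `k ∈ K`,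
written in closed (inclusion–exclusion) form: the coordinates in `L ⊆ K` are reflected to
`1 - u k`, the remaining coordinates of `K` are set to `1`. -/
noncomputable def nuK {d : ℕ} (K : Finset (Fin d)) (C : Cube d → ℝ) : Cube d → ℝ :=
  fun u => ∑ L ∈ K.powerset, (-1 : ℝ) ^ L.card *
    C (fun k => if k ∈ L then unitInterval.symm (u k) else if k ∈ K then 1 else u k)

/-- The total reflection `τ = ν_{{1,...,d}}`, sending a copula to its survival copula. -/
noncomputable def survival {d : ℕ} (C : Cube d → ℝ) : Cube d → ℝ := nuK Finset.univ C

/-- The concordance order `C ⪯ D`: `C(u) ≤ D(u)` and `(τ C)(u) ≤ (τ D)(u)` for all `u`. -/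
def ConcLE {d : ℕ} (C D : Cube d → ℝ) : Prop :=
  (∀ u, C u ≤ D u) ∧ (∀ u, survival C u ≤ survival D u)

/-- A minimal copula: a minimal element of the set of all copulas w.r.t. concordance order. -/
def IsMinimalCopula {d : ℕ} (C : Cube d → ℝ) : Prop :=
  IsCopula C ∧ ∀ D : Cube d → ℝ, IsCopula D → ConcLE D C → D = C

/-- `μ` is the copula measure `Q^C` of `C`: a Borel probability measure on the cube
with `μ [0,u] = C u` for all `u`. -/
def IsCopulaMeasure {d : ℕ} (C : Cube d → ℝ) (μ : Measure (Cube d)) : Prop :=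
  IsProbabilityMeasure μ ∧ ∀ u : Cube d, μ (Set.Icc 0 u) = ENNReal.ofReal (C u)

/-- `C` is `K`-countermonotonic: there are strictly increasing continuous functions
`g k : [0,1] → ℝ` (`k ∈ K`) and `c : ℝ` with `Q^C {u : ∑ k ∈ K, g k (u k) = c} = 1`. -/
def IsKCM {d : ℕ} (K : Finset (Fin d)) (C : Cube d → ℝ) : Prop :=
  ∃ (g : Fin d → unitInterval → ℝ) (c : ℝ),
    (∀ k ∈ K, StrictMono (g k) ∧ Continuous (g k)) ∧
    ∃ μ : Measure (Cube d), IsCopulaMeasure C μ ∧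
      μ {u : Cube d | ∑ k ∈ K, g k (u k) = c} = 1

/-- `C` is Kendall-countermonotonic (`τ`-CM):
`min (C u) ((τ C)(1 - u)) = 0` for every `u` with `0 < u < 1` coordinatewise. -/
noncomputable def IsTauCM {d : ℕ} (C : Cube d → ℝ) : Prop :=
  ∀ u : Cube d, (∀ k, 0 < u k ∧ u k < 1) →
    min (C u) (survival C (fun k => unitInterval.symm (u k))) = 0

/-- The upper Fréchet–Hoeffding bound `M(u) = min {u_1, ..., u_d}`. -/
noncomputable def Mcop {d : ℕ} : Cube d → ℝ :=
  fun u => sInf (Set.range fun k => (u k : ℝ))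

/-- `κ` is continuous: `κ (Cₙ) → κ C` whenever copulas `Cₙ` converge uniformly to a copula `C`. -/
def ContinuousFunctional {d : ℕ} (κ : (Cube d → ℝ) → ℝ) : Prop :=
  ∀ (Cs : ℕ → Cube d → ℝ) (C : Cube d → ℝ), (∀ n, IsCopula (Cs n)) → IsCopula C →
    TendstoUniformly Cs C Filter.atTop →
    Filter.Tendsto (fun n => κ (Cs n)) Filter.atTop (nhds (κ C))

/-- `κ` is concordance order preserving. -/
def ConcPreserving {d : ℕ} (κ : (Cube d → ℝ) → ℝ) : Prop :=
  ∀ C D : Cube d → ℝ, IsCopula C → IsCopula D → ConcLE C D → κ C ≤ κ D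

/-- `κ` is strictly concordance order preserving. -/
def StrictConcPreserving {d : ℕ} (κ : (Cube d → ℝ) → ℝ) : Prop :=
  ConcPreserving κ ∧
  ∀ C D : Cube d → ℝ, IsCopula C → IsCopula D → ConcLE C D → C ≠ D → κ C < κ D

/-- `m(κ,𝒟)`: the set of all `D ∈ 𝒟` with `κ D = inf_{C ∈ 𝒟} κ C`. -/
noncomputable def MinSet {d : ℕ} (κ : (Cube d → ℝ) → ℝ) (𝒟 : Set (Cube d → ℝ)) :
    Set (Cube d → ℝ) :=
  {D ∈ 𝒟 | κ D = sInf (κ '' 𝒟)}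


/-!
Since `κ` is continuous on the compact set `𝒟` (for uniform convergence), its minimizers form a
nonempty compact set. The lower sets `{E | E ⪯ C}` are closed, so by compactness every chain of
minimizers has a lower bound among the minimizers, and Zorn's lemma yields a `⪯`-minimal
minimizer `M`. As `κ` is order preserving, every `E ∈ 𝒟` with `E ⪯ M` is again a minimizer, hence
`E = M`. The second claim is the case where `𝒟` is the set of all copulas, which is compact by
Arzelà–Ascoli: copulas take values in `[0,1]` and are `d`-Lipschitz.
-/

open Function

section SeveralVariables

variable {ι α : Type*} [Fintype ι] [DecidableEq ι]

theorem monotone_of_le_update [Preorder α] {β : Type*} [Preorder β] {f : (ι → α) → β}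
    (h : ∀ u i a, u i ≤ a → f u ≤ f (update u i a)) : Monotone f := by
  intro u v huv
  have key : ∀ T : Finset ι, f u ≤ f (T.piecewise v u) := by
    intro T
    induction T using Finset.induction_on with
    | empty => simp
    | insert j T hj ih =>
      rw [Finset.piecewise_insert]
      refine ih.trans (h _ j _ ?_)
      rw [Finset.piecewise_eq_of_notMem _ _ _ hj]
      exact huv j
  simpa using key Finset.univ

theorem lipschitzWith_card_of_dist_update_le [PseudoMetricSpace α] {β : Type*}
    [PseudoMetricSpace β] {f : (ι → α) → β}
    (h : ∀ u i a b, dist (f (update u i a)) (f (update u i b)) ≤ dist a b) :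
    LipschitzWith (Fintype.card ι) f := by
  have key : ∀ (u v : ι → α) (T : Finset ι),
      dist (f (T.piecewise u v)) (f v) ≤ ∑ i ∈ T, dist (u i) (v i) := by
    intro u v T
    induction T using Finset.induction_on with
    | empty => simp
    | insert j T hj ih =>
      set w := T.piecewise u v
      have hwj : w j = v j := Finset.piecewise_eq_of_notMem _ _ _ hj
      calc dist (f ((insert j T).piecewise u v)) (f v)
          ≤ dist (f (update w j (u j))) (f (update w j (w j))) + dist (f w) (f v) := by
            rw [Finset.piecewise_insert, update_eq_self]
            exact dist_triangle _ _ _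
        _ ≤ dist (u j) (v j) + ∑ i ∈ T, dist (u i) (v i) := by
            rw [← hwj]
            exact add_le_add (h _ _ _ _) ih
        _ = ∑ i ∈ insert j T, dist (u i) (v i) := by rw [Finset.sum_insert hj]
  refine LipschitzWith.of_dist_le_mul fun u v => ?_
  calc dist (f u) (f v) ≤ ∑ i, dist (u i) (v i) := by simpa using key u v Finset.univ
    _ ≤ ∑ _i : ι, dist u v := Finset.sum_le_sum fun i _ => dist_le_pi_dist u v i
    _ = Fintype.card ι * dist u v := by simp

end SeveralVariables

theorem IsCompact.exists_minimal_of_isClosed_setOf_rel {X : Type*} [TopologicalSpace X]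
    {r : X → X → Prop} (hrefl : ∀ x, r x x) (htrans : ∀ {x y z}, r x y → r y z → r x z)
    (hclosed : ∀ y, IsClosed {x | r x y}) {s : Set X} (hs : IsCompact s) (hne : s.Nonempty) :
    ∃ m ∈ s, ∀ x ∈ s, r x m → r m x := by
  suffices hchain : ∀ c : Set s, IsChain (fun a b : s => r b a) c → ∃ lb : s, ∀ a ∈ c, r lb a by
    obtain ⟨m, hm⟩ := exists_maximal_of_chains_bounded hchain fun {a b c} hab hbc =>
      htrans (x := c.1) hbc hab
    exact ⟨m, m.2, fun x hx hxm => hm ⟨x, hx⟩ hxm⟩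
  intro c hc
  rcases c.eq_empty_or_nonempty with rfl | ⟨a₀, ha₀⟩
  · exact ⟨⟨_, hne.some_mem⟩, by simp⟩
  have : Nonempty c := ⟨⟨a₀, ha₀⟩⟩
  set t : c → Set X := fun a => {x | r x a.1.1}
  have hdir : Directed (· ⊇ ·) t := by
    intro a b
    rcases eq_or_ne a b with rfl | hab
    · exact ⟨a, subset_rfl, subset_rfl⟩
    rcases hc a.2 b.2 (fun h : a.1 = b.1 => hab (Subtype.ext h)) with h | h
    · exact ⟨b, fun x hx => htrans hx h, subset_rfl⟩
    · exact ⟨a, subset_rfl, fun x hx => htrans hx h⟩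
  obtain ⟨x, hxs, hx⟩ : (s ∩ ⋂ a, t a).Nonempty := by
    rw [Set.nonempty_iff_ne_empty]
    intro hempty
    obtain ⟨a, ha⟩ := hs.elim_directed_family_closed t (fun a => hclosed _) hempty hdir
    exact ha.subset ⟨a.1.2, hrefl _⟩
  exact ⟨⟨x, hxs⟩, fun a ha => Set.mem_iInter.mp hx ⟨a, ha⟩⟩

section CopulaBasics

variable {d : ℕ}

lemma etaK_empty (u v : Cube d) : etaK ∅ u v = u := by
  funext i; simp [etaK]

lemma etaK_singleton (j : Fin d) (u v : Cube d) : etaK {j} u v = update u j (v j) := by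
  funext i; by_cases hi : i = j <;> simp [etaK, hi]

lemma etaK_pair {j k : Fin d} (hjk : j ≠ k) (u v : Cube d) :
    etaK {j, k} u v = update (update u j (v j)) k (v k) := by
  funext i
  by_cases hik : i = k
  · subst hik; simp [etaK]
  · by_cases hij : i = j
    · subst hij; simp [etaK, hik]
    · simp [etaK, hij, hik]

variable {C : Cube d → ℝ}

namespace IsCopula

lemma apply_eq_zero (h : IsCopula C) {u : Cube d} (k : Fin d) (hk : u k = 0) : C u = 0 := by
  simpa [etaK_singleton, ← hk] using h.2.1 k u

lemma apply_update_one (h : IsCopula C) (k : Fin d) (t : unitInterval) :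
    C (update 1 k t) = t := by
  simpa [etaK_singleton] using h.2.2 k (fun _ => t)

/-- Every face of the box `[u, v]` has nonnegative `C`-volume. -/
lemma sum_powerset_nonneg (h : IsCopula C) (S : Finset (Fin d)) {u v : Cube d}
    (huv : ∀ j ∈ S, u j ≤ v j) :
    0 ≤ ∑ J ∈ S.powerset, (-1 : ℝ) ^ (S.card - J.card) * C (etaK J u v) := by
  set f : Finset (Fin d) → ℝ := fun K =>
    (-1 : ℝ) ^ (d - K.card) * C (etaK K (etaK S 0 u) (etaK S u v))
  have hvol : 0 ≤ ∑ K, f K := h.1 _ _ fun j => by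
    by_cases hj : j ∈ S <;> simp [etaK, hj, huv]
  -- Off `S` the lower corner is `0`, so only the boxes with `Sᶜ ⊆ K` contribute.
  have hvanish : ∀ K ∈ Finset.univ, K ∉ S.powerset.image (Sᶜ ∪ ·) → f K = 0 := by
    intro K _ hK
    obtain ⟨j, hjS, hjK⟩ : ∃ j, j ∉ S ∧ j ∉ K := by
      by_contra! hcontra
      refine hK (Finset.mem_image.mpr
        ⟨K ∩ S, Finset.mem_powerset.mpr Finset.inter_subset_right, ?_⟩)
      ext i; by_cases hi : i ∈ S <;> simp [hi, hcontra i]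
    show _ * _ = 0
    rw [h.apply_eq_zero j (by simp [etaK, hjS, hjK]), mul_zero]
  have hinj : Set.InjOn (Sᶜ ∪ ·) S.powerset := by
    intro J hJ J' hJ' hJJ'
    ext i
    have := congrArg (i ∈ ·) hJJ'
    by_cases hi : i ∈ S
    · simpa [hi] using this
    · simp only [Finset.coe_powerset, Set.mem_preimage, Set.mem_powerset_iff,
        Finset.coe_subset] at hJ hJ'
      exact iff_of_false (fun h => hi (hJ h)) (fun h => hi (hJ' h))
  calc (0 : ℝ) ≤ ∑ K, f K := hvol
    _ = ∑ J ∈ S.powerset, f (Sᶜ ∪ J) := by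
      rw [← Finset.sum_subset (Finset.subset_univ _) hvanish, Finset.sum_image hinj]
    _ = _ := by
      refine Finset.sum_congr rfl fun J hJ => ?_
      have hJS := Finset.mem_powerset.mp hJ
      have hcard : (Sᶜ ∪ J).card = d - S.card + J.card := by
        rw [Finset.card_union_of_disjoint (disjoint_compl_left.mono_right hJS),
          Finset.card_compl, Fintype.card_fin]
      have hJ_le := Finset.card_le_card hJS
      have hS_le : S.card ≤ d := by simpa using Finset.card_le_univ S
      have heta : etaK (Sᶜ ∪ J) (etaK S 0 u) (etaK S u v) = etaK J u v := by
        funext i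
        by_cases hi : i ∈ S
        · by_cases hiJ : i ∈ J <;> simp [etaK, hi, hiJ]
        · simp [etaK, hi, show i ∉ J from fun hiJ => hi (hJS hiJ)]
      simp only [f, hcard, heta]
      congr 2
      omega

lemma le_update (h : IsCopula C) {u : Cube d} {j : Fin d} {a : unitInterval} (ha : u j ≤ a) :
    C u ≤ C (update u j a) := by
  have hface := h.sum_powerset_nonneg {j} (u := u) (v := update u j a) (by simpa using ha)
  rw [show ({j} : Finset (Fin d)) = insert j ∅ from rfl,
    Finset.sum_powerset_insert (Finset.notMem_empty j)] at hface
  simp [etaK_empty, etaK_singleton] at hface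
  linarith

lemma monotone (h : IsCopula C) : Monotone C :=
  monotone_of_le_update fun _ _ _ => h.le_update

lemma nonneg (h : IsCopula C) (hd : 0 < d) (u : Cube d) : 0 ≤ C u := by
  have hk := h.apply_eq_zero (u := update u ⟨0, hd⟩ 0) ⟨0, hd⟩ (by simp)
  exact hk ▸ h.monotone (update_le_self_iff.mpr unitInterval.nonneg')

lemma le_one (h : IsCopula C) (hd : 0 < d) (u : Cube d) : C u ≤ 1 := by
  have h1 := h.apply_update_one ⟨0, hd⟩ 1
  rw [show update (1 : Cube d) ⟨0, hd⟩ 1 = 1 from update_eq_self _ _] at h1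
  calc C u ≤ C 1 := h.monotone fun _ => unitInterval.le_one'
    _ = 1 := by simpa using h1

lemma add_le_add_update_update (h : IsCopula C) {u v : Cube d} {j k : Fin d} (hjk : j ≠ k)
    (hj : u j ≤ v j) (hk : u k ≤ v k) :
    C (update u j (v j)) + C (update u k (v k)) ≤
      C u + C (update (update u j (v j)) k (v k)) := by
  have hface := h.sum_powerset_nonneg {j, k} (u := u) (v := v) (by simp [hj, hk])
  have hjk' : j ∉ ({k} : Finset (Fin d)) := by simpa using hjk
  rw [Finset.sum_powerset_insert hjk', show ({k} : Finset (Fin d)) = insert k ∅ from rfl,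
    Finset.sum_powerset_insert (Finset.notMem_empty k),
    Finset.sum_powerset_insert (Finset.notMem_empty k)] at hface
  simp [Finset.card_insert_of_notMem hjk', etaK_empty, etaK_singleton, etaK_pair hjk] at hface
  linarith

lemma monotone_sub_update (h : IsCopula C) (k : Fin d) {s t : unitInterval} (hst : s ≤ t) :
    Monotone fun w => C (update w k t) - C (update w k s) := by
  refine monotone_of_le_update fun w j a hja => ?_
  by_cases hjk : j = k
  · subst hjk; simp
  have hpair := h.add_le_add_update_update (u := update w k s)
    (v := update (update w j a) k t) hjk (by simpa [hjk] using hja) (by simpa using hst)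
  simp only [update_self, update_of_ne hjk] at hpair
  rw [update_comm (Ne.symm hjk)] at hpair
  simp only [update_idem] at hpair
  linarith

lemma sub_update_le (h : IsCopula C) (w : Cube d) (k : Fin d) {s t : unitInterval}
    (hst : s ≤ t) : C (update w k t) - C (update w k s) ≤ t - s := by
  have hw := h.monotone_sub_update k hst (show w ≤ 1 from fun _ => unitInterval.le_one')
  simpa [h.apply_update_one] using hw

lemma dist_update_le (h : IsCopula C) (w : Cube d) (k : Fin d) (a b : unitInterval) :
    dist (C (update w k a)) (C (update w k b)) ≤ dist a b := by
  wlog hba : b ≤ a generalizing a b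
  · rw [dist_comm, dist_comm a]
    exact this b a (le_of_not_ge hba)
  have hmono : C (update w k b) ≤ C (update w k a) := h.monotone (update_le_update_iff'.mpr hba)
  have hba' : (b : ℝ) ≤ a := hba
  rw [Real.dist_eq, abs_of_nonneg (sub_nonneg.mpr hmono), Subtype.dist_eq, Real.dist_eq,
    abs_of_nonneg (sub_nonneg.mpr hba')]
  exact h.sub_update_le w k hba

lemma lipschitzWith (h : IsCopula C) : LipschitzWith d C := by
  simpa using lipschitzWith_card_of_dist_update_le h.dist_update_le

end IsCopula

end CopulaBasics

section Compactness

variable {d : ℕ}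

lemma isClosed_setOf_isCopula : IsClosed {C : Cube d → ℝ | IsCopula C} := by
  simp only [IsCopula, Set.ofPred_and, Set.ofPred_forall]
  refine .inter (isClosed_iInter fun u => isClosed_iInter fun v => isClosed_iInter fun _ => ?_)
    (.inter (isClosed_iInter fun k => isClosed_iInter fun u => ?_)
      (isClosed_iInter fun k => isClosed_iInter fun u => ?_))
  · exact isClosed_le continuous_const
      (continuous_finsetSum _ fun K _ => continuous_const.mul (continuous_apply _))
  · exact isClosed_eq (continuous_apply _) continuous_const
  · exact isClosed_eq (continuous_apply _) continuous_const

lemma isCompact_image_ofFun_setOf_isCopula (hd : 0 < d) :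
    IsCompact (UniformFun.ofFun '' {C : Cube d → ℝ | IsCopula C} :
      Set (UniformFun (Cube d) ℝ)) := by
  set P := {C : Cube d → ℝ | IsCopula C}
  have hP : IsCompact P :=
    (isCompact_univ_pi fun _ => isCompact_Icc).of_isClosed_subset isClosed_setOf_isCopula
      fun C hC u _ => ⟨hC.nonneg hd u, hC.le_one hd u⟩
  have : CompactSpace P := isCompact_iff_compactSpace.mp hP
  have hequi : Equicontinuous ((↑) : P → Cube d → ℝ) :=
    (LipschitzWith.uniformEquicontinuous _ d fun C => C.2.lipschitzWith).equicontinuous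
  have hind : Topology.IsInducing (UniformFun.ofFun ∘ ((↑) : P → Cube d → ℝ)) :=
    hequi.inducing_uniformFun_iff_pi.mpr Topology.IsInducing.subtypeVal
  simpa [Set.range_comp] using isCompact_range hind.continuous

end Compactness

section ConcordanceOrder

variable {d : ℕ}

lemma ConcLE.refl (C : Cube d → ℝ) : ConcLE C C :=
  ⟨fun _ => le_rfl, fun _ => le_rfl⟩

lemma ConcLE.trans {A B C : Cube d → ℝ} (hAB : ConcLE A B) (hBC : ConcLE B C) : ConcLE A C :=
  ⟨fun u => (hAB.1 u).trans (hBC.1 u), fun u => (hAB.2 u).trans (hBC.2 u)⟩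

lemma ConcLE.antisymm {C D : Cube d → ℝ} (hCD : ConcLE C D) (hDC : ConcLE D C) : C = D :=
  funext fun u => (hCD.1 u).antisymm (hDC.1 u)

lemma isClosed_setOf_concLE (D : Cube d → ℝ) :
    IsClosed {F : UniformFun (Cube d) ℝ | ConcLE (UniformFun.toFun F) D} := by
  have heval (u : Cube d) : Continuous fun F : UniformFun (Cube d) ℝ => UniformFun.toFun F u :=
    (UniformFun.uniformContinuous_eval ℝ u).continuous
  simp only [ConcLE, Set.ofPred_and, Set.ofPred_forall]
  refine .inter (isClosed_iInter fun u => isClosed_le (heval u) continuous_const)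
    (isClosed_iInter fun u => isClosed_le ?_ continuous_const)
  unfold survival nuK
  exact continuous_finsetSum _ fun L _ => continuous_const.mul (heval _)

end ConcordanceOrder

section Minimizers

variable {d : ℕ} {κ : (Cube d → ℝ) → ℝ} {𝒟 : Set (Cube d → ℝ)}

lemma ContinuousFunctional.continuousOn (hκ : ContinuousFunctional κ)
    (h𝒟 : ∀ C ∈ 𝒟, IsCopula C) :
    ContinuousOn (fun F : UniformFun (Cube d) ℝ => κ (UniformFun.toFun F))
      (UniformFun.ofFun '' 𝒟) := by
  have hmem : ∀ F ∈ UniformFun.ofFun '' 𝒟, IsCopula (UniformFun.toFun F) := by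
    rintro _ ⟨C, hC, rfl⟩
    exact h𝒟 C hC
  rw [continuousOn_iff_continuous_domRestrict, continuous_iff_seqContinuous]
  intro F F₀ hF
  have hF' := (continuous_subtype_val.tendsto F₀).comp hF
  rw [UniformFun.tendsto_iff_tendstoUniformly] at hF'
  exact hκ _ _ (fun n => hmem _ (F n).2) (hmem _ F₀.2) hF'

lemma ContinuousFunctional.exists_isMinOn (hκc : ContinuousFunctional κ)
    (h𝒟cop : ∀ C ∈ 𝒟, IsCopula C) (h𝒟ne : 𝒟.Nonempty)
    (h𝒟cpt : IsCompact (UniformFun.ofFun '' 𝒟 : Set (UniformFun (Cube d) ℝ))) :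
    ∃ C₀ ∈ 𝒟, IsMinOn κ 𝒟 C₀ := by
  obtain ⟨_, ⟨C₀, hC₀, rfl⟩, hmin⟩ :=
    h𝒟cpt.exists_isMinOn (h𝒟ne.image _) (hκc.continuousOn h𝒟cop)
  exact ⟨C₀, hC₀, fun C hC => hmin (Set.mem_image_of_mem _ hC)⟩

lemma mem_minSet_of_isMinOn {C₀ : Cube d → ℝ} (hC₀ : C₀ ∈ 𝒟) (hmin : IsMinOn κ 𝒟 C₀)
    {C : Cube d → ℝ} (hC : C ∈ 𝒟) (hκC : κ C = κ C₀) : C ∈ MinSet κ 𝒟 := by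
  refine ⟨hC, hκC.trans (IsLeast.csInf_eq ⟨Set.mem_image_of_mem κ hC₀, ?_⟩).symm⟩
  rintro _ ⟨E, hE, rfl⟩
  exact hmin hE

theorem exists_mem_minSet_forall_concLE_imp_eq (hκc : ContinuousFunctional κ)
    (hκm : ConcPreserving κ) (h𝒟cop : ∀ C ∈ 𝒟, IsCopula C) (h𝒟ne : 𝒟.Nonempty)
    (h𝒟cpt : IsCompact (UniformFun.ofFun '' 𝒟 : Set (UniformFun (Cube d) ℝ))) :
    ∃ C ∈ MinSet κ 𝒟, ∀ E ∈ 𝒟, ConcLE E C → E = C := by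
  obtain ⟨C₀, hC₀, hmin⟩ := hκc.exists_isMinOn h𝒟cop h𝒟ne h𝒟cpt
  set S := UniformFun.ofFun '' 𝒟 ∩ (fun F => κ (UniformFun.toFun F)) ⁻¹' {κ C₀}
  have hS : IsCompact S := h𝒟cpt.of_isClosed_subset
    ((hκc.continuousOn h𝒟cop).preimage_isClosed_of_isClosed h𝒟cpt.isClosed isClosed_singleton)
    Set.inter_subset_left
  obtain ⟨_, ⟨⟨C, hC, rfl⟩, hκC⟩, hCmin⟩ :=
    hS.exists_minimal_of_isClosed_setOf_rel (r := fun F G => ConcLE F.toFun G.toFun)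
      (fun _ => ConcLE.refl _) ConcLE.trans (fun G => isClosed_setOf_concLE G.toFun)
      ⟨_, ⟨C₀, hC₀, rfl⟩, rfl⟩
  refine ⟨C, mem_minSet_of_isMinOn hC₀ hmin hC hκC, fun E hE hEC => ?_⟩
  have hκE : κ E = κ C₀ :=
    le_antisymm ((hκm E C (h𝒟cop E hE) (h𝒟cop C hC) hEC).trans_eq hκC) (hmin hE)
  exact hEC.antisymm (hCmin _ ⟨⟨E, hE, rfl⟩, hκE⟩ hEC)

end Minimizers

/-- A continuous, concordance order preserving functional attains its infimum over any
nonempty compact set of copulas at some minimal element of that set; in particular its set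
of minimizers over all copulas contains a minimal copula. -/
theorem stmt13 (d : ℕ) (hd : 2 ≤ d) (κ : (Cube d → ℝ) → ℝ)
    (hκc : ContinuousFunctional κ) (hκm : ConcPreserving κ)
    (𝒟 : Set (Cube d → ℝ))
    (h𝒟cop : ∀ C ∈ 𝒟, IsCopula C) (h𝒟ne : 𝒟.Nonempty)
    (h𝒟cpt : IsCompact (UniformFun.ofFun '' 𝒟 : Set (UniformFun (Cube d) ℝ))) :
    (∃ C ∈ MinSet κ 𝒟, ∀ E ∈ 𝒟, ConcLE E C → E = C) ∧
    (∃ C ∈ MinSet κ {C : Cube d → ℝ | IsCopula C}, IsMinimalCopula C) := by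
  refine ⟨exists_mem_minSet_forall_concLE_imp_eq hκc hκm h𝒟cop h𝒟ne h𝒟cpt, ?_⟩
  obtain ⟨C, hC, hCmin⟩ := exists_mem_minSet_forall_concLE_imp_eq hκc hκm (fun _ => id)
    (h𝒟ne.mono h𝒟cop) (isCompact_image_ofFun_setOf_isCopula (by omega))
  exact ⟨C, hC, hC.1, hCmin⟩
end

section
/- Let C be a d-dimensional copula that is not Kendall-countermonotonic. Then there exist p ∈ (0, 1/2] and a, b ∈ (0,1)^d with a ≤ b (coordinatewise) such that Q^C([0,a]) = p = Q^C([b,1]). -/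
open MeasureTheory unitInterval

/-!
The copula measure `Q^C` has uniform marginals, so coordinate hyperplanes are `Q^C`-null and,
by inclusion–exclusion, `(τ C)(1 - u) = Q^C [u,1]`. A witness `u` of the failure of
τ-countermonotonicity therefore gives two boxes `[0,u]` and `[u,1]` of positive masses `α` and `s`,
with `α + s ≤ 1` since they meet in a null set. If `α ≤ s`, move the corner of the upper box along
`t ↦ u ⊔ t`: uniform marginals make `x ↦ Q^C [x,1]` Lipschitz, so `Q^C [u ⊔ t, 1]` decreases
continuously from `s` to `0` and takes the value `α`. The case `s ≤ α` is the same argument for the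
image of `Q^C` under the reflection `w ↦ 1 - w`.
-/

theorem Set.indicator_iInter_compl_apply {ι Ω : Type*} [Fintype ι] (S : ι → Set Ω) (w : Ω) :
    (⋂ i, (S i)ᶜ).indicator (1 : Ω → ℝ) w =
      ∑ L : Finset ι, (-1) ^ L.card * (⋂ i ∈ L, S i).indicator 1 w := by
  classical
  have := prod_indicator_apply Finset.univ (fun i => (S i)ᶜ) (fun _ => (1 : Ω → ℝ)) w
  simp only [Finset.mem_univ, iInter_true, Finset.prod_const_one, indicator_compl, Pi.sub_apply,
    Pi.one_apply] at this
  rw [← this, Finset.prod_sub, Finset.powerset_univ]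
  refine Finset.sum_congr rfl fun L _ => ?_
  simp [prod_indicator_apply]

theorem MeasureTheory.measureReal_iInter_compl {ι Ω : Type*} [Fintype ι] [MeasurableSpace Ω]
    (μ : Measure Ω) [IsFiniteMeasure μ] {S : ι → Set Ω} (hS : ∀ i, MeasurableSet (S i)) :
    μ.real (⋂ i, (S i)ᶜ) = ∑ L : Finset ι, (-1) ^ L.card * μ.real (⋂ i ∈ L, S i) := by
  have hmeas : ∀ L : Finset ι, MeasurableSet (⋂ i ∈ L, S i) :=
    fun L => L.measurableSet_biInter fun i _ => hS i
  rw [← integral_indicator_one (MeasurableSet.iInter fun i => (hS i).compl)]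
  simp_rw [Set.indicator_iInter_compl_apply]
  rw [integral_finsetSum _ fun L _ => ((integrable_const 1).indicator (hmeas L)).const_mul _]
  simp_rw [integral_const_mul, integral_indicator_one (hmeas _)]

section Copula

variable {d : ℕ}

lemma IsCopula.nonneg_s18 {C : Cube d → ℝ} (hC : IsCopula C) (w : Cube d) : 0 ≤ C w := by
  have hvol := hC.1 0 w fun _ => nonneg'
  rw [Finset.sum_eq_single Finset.univ] at hvol
  · have hw : etaK Finset.univ 0 w = w := by ext j; simp [etaK]
    simpa [hw] using hvol
  · intro K _ hK
    obtain ⟨k, hk⟩ : ∃ k, k ∉ K := by simpa [Finset.eq_univ_iff_forall] using hK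
    have hgrounded : etaK K 0 w = etaK {k} (etaK K 0 w) 0 := by
      ext j
      by_cases hj : j = k
      · subst hj; simp [etaK, hk]
      · simp [etaK, hj]
    rw [hgrounded, hC.2.1, mul_zero]
  · simp

def HasUniformMarginals (μ : Measure (Cube d)) : Prop :=
  ∀ k, μ.map (fun w => w k) = volume

lemma IsCopulaMeasure.hasUniformMarginals {C : Cube d → ℝ} {μ : Measure (Cube d)}
    (hC : IsCopula C) (hμ : IsCopulaMeasure C μ) : HasUniformMarginals μ := by
  intro k
  have := hμ.1
  refine Measure.ext_of_Iic _ _ fun t => ?_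
  have hslab : (fun w : Cube d => w k) ⁻¹' Set.Iic t = Set.Icc 0 (etaK {k} 1 fun _ => t) := by
    ext w
    simp only [Set.mem_preimage, Set.mem_Iic, Set.mem_Icc, Pi.le_def, etaK,
      Finset.mem_singleton]
    refine ⟨fun hw => ⟨fun _ => nonneg', fun j => ?_⟩, fun hw => by simpa using hw.2 k⟩
    split_ifs with hj
    · exact hj ▸ hw
    · exact le_one'
  rw [Measure.map_apply (measurable_pi_apply k) measurableSet_Iic, hslab, hμ.2, hC.2.2,
    unitInterval.volume_Iic]

namespace HasUniformMarginals

variable {μ : Measure (Cube d)}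

lemma measure_preimage_coord (h : HasUniformMarginals μ) (k : Fin d) {s : Set unitInterval}
    (hs : MeasurableSet s) : μ ((fun w => w k) ⁻¹' s) = volume s := by
  rw [← Measure.map_apply (measurable_pi_apply k) hs, h k]

lemma measure_coord_eq (h : HasUniformMarginals μ) (k : Fin d) (c : unitInterval) :
    μ {w | w k = c} = 0 :=
  (h.measure_preimage_coord k (measurableSet_singleton c)).trans (measure_singleton c)

lemma measure_iUnion_coord_eq (h : HasUniformMarginals μ) (x : Cube d) :
    μ (⋃ k, {w | w k = x k}) = 0 :=
  measure_iUnion_null fun k => h.measure_coord_eq k (x k)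

lemma lipschitzWith_measureReal_Icc_one [IsFiniteMeasure μ] (h : HasUniformMarginals μ) :
    LipschitzWith d fun x : Cube d => μ.real (Set.Icc x 1) := by
  refine LipschitzWith.of_le_add_mul _ fun x y => ?_
  have hcover : Set.Icc x 1 ⊆ Set.Icc y 1 ∪ ⋃ k, (fun w => w k) ⁻¹' Set.uIcc (x k) (y k) := by
    intro w hw
    by_cases hyw : y ≤ w
    · exact Or.inl ⟨hyw, hw.2⟩
    · obtain ⟨k, hk⟩ : ∃ k, w k < y k := by simpa [Pi.le_def] using hyw
      exact Or.inr (Set.mem_iUnion.2 ⟨k, Set.Icc_subset_uIcc ⟨hw.1 k, hk.le⟩⟩)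
  have hslab : ∀ k, μ.real ((fun w => w k) ⁻¹' Set.uIcc (x k) (y k)) ≤ dist x y := fun k => by
    rw [measureReal_def, h.measure_preimage_coord k measurableSet_uIcc,
      unitInterval.volume_uIcc, edist_dist, ENNReal.toReal_ofReal dist_nonneg, dist_comm]
    exact dist_le_pi_dist x y k
  calc μ.real (Set.Icc x 1)
      ≤ μ.real (Set.Icc y 1) + ∑ k, μ.real ((fun w => w k) ⁻¹' Set.uIcc (x k) (y k)) :=
        (measureReal_mono hcover).trans ((measureReal_union_le _ _).trans
          (by gcongr; exact measureReal_iUnion_fintype_le _))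
    _ ≤ μ.real (Set.Icc y 1) + d * dist x y := by
        grw [Finset.sum_le_sum fun k _ => hslab k]
        simp

lemma exists_measureReal_Icc_one_eq [IsFiniteMeasure μ] [NeZero d] (h : HasUniformMarginals μ)
    {u : Cube d} (hu : ∀ k, u k < 1) {p : ℝ} (hp : 0 < p) (hpu : p ≤ μ.real (Set.Icc u 1)) :
    ∃ b, u ≤ b ∧ (∀ k, b k < 1) ∧ μ.real (Set.Icc b 1) = p := by
  set f : unitInterval → ℝ := fun t => μ.real (Set.Icc (fun k => max (u k) t) 1)
  have hf : Continuous f := h.lipschitzWith_measureReal_Icc_one.continuous.comp <|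
    continuous_pi fun k => continuous_const.max continuous_id
  have hf0 : f 0 = μ.real (Set.Icc u 1) := by simp [f]
  have hf1 : f 1 = 0 := by
    have hcorner : μ {1} = 0 :=
      measure_mono_null (fun w hw => congrFun hw 0) (h.measure_coord_eq 0 1)
    have hmax : (fun k => max (u k) 1) = (1 : Cube d) := funext fun k => max_eq_right le_one'
    simp [f, hmax, measureReal_def, hcorner]
  obtain ⟨t, ht⟩ := intermediate_value_univ 1 0 hf ⟨hf1 ▸ hp.le, hf0 ▸ hpu⟩
  have ht1 : t < 1 := lt_of_le_of_ne le_one' fun h1 => hp.ne' (by rw [← ht, h1, hf1])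
  exact ⟨_, fun k => le_max_left _ _, fun k => max_lt (hu k) ht1, ht⟩

end HasUniformMarginals

def cubeSymm (w : Cube d) : Cube d := fun k => unitInterval.symm (w k)

@[simp]
lemma cubeSymm_cubeSymm (w : Cube d) : cubeSymm (cubeSymm w) = w := by
  ext k; simp [cubeSymm]

lemma measurable_cubeSymm : Measurable (cubeSymm (d := d)) :=
  measurable_pi_lambda _ fun k => unitInterval.measurable_symm.comp (measurable_pi_apply k)

lemma cubeSymm_le_iff {x y : Cube d} : cubeSymm x ≤ y ↔ cubeSymm y ≤ x := by
  simp only [Pi.le_def, cubeSymm, unitInterval.symm_le_comm]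

lemma measureReal_map_cubeSymm_Icc_one (μ : Measure (Cube d)) (x : Cube d) :
    (μ.map cubeSymm).real (Set.Icc x 1) = μ.real (Set.Icc 0 (cubeSymm x)) := by
  have hpre : cubeSymm ⁻¹' Set.Icc x 1 = Set.Icc 0 (cubeSymm x) := by
    ext w
    simp [Pi.le_def, cubeSymm, unitInterval.le_symm_comm, le_one']
  rw [measureReal_def, Measure.map_apply measurable_cubeSymm measurableSet_Icc, hpre,
    measureReal_def]

lemma HasUniformMarginals.map_cubeSymm {μ : Measure (Cube d)} (h : HasUniformMarginals μ) :
    HasUniformMarginals (μ.map cubeSymm) := by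
  intro k
  rw [Measure.map_map (measurable_pi_apply k) measurable_cubeSymm]
  change μ.map (unitInterval.symm ∘ fun w => w k) = volume
  rw [← Measure.map_map unitInterval.measurable_symm (measurable_pi_apply k), h k,
    unitInterval.measurePreserving_symm.map_eq]

lemma IsCopulaMeasure.survival_cubeSymm_eq {C : Cube d → ℝ} {μ : Measure (Cube d)}
    (hC : IsCopula C) (hμ : IsCopulaMeasure C μ) (v : Cube d) :
    survival C (cubeSymm v) = μ.real (Set.Icc v 1) := by
  have := hμ.1
  set S : Fin d → Set (Cube d) := fun k => {w | w k ≤ v k}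
  have hS : ∀ k, MeasurableSet (S k) := fun k =>
    measurableSet_le (measurable_pi_apply k) measurable_const
  have hbox : ∀ L : Finset (Fin d),
      ⋂ k ∈ L, S k = Set.Icc 0 fun k => if k ∈ L then v k else 1 := by
    intro L
    ext w
    simp only [Set.mem_iInter, Set.mem_Icc, Pi.le_def, S]
    refine ⟨fun hw => ⟨fun _ => nonneg', fun k => ?_⟩, fun hw k hk => by simpa [hk] using hw.2 k⟩
    split_ifs with hk
    · exact hw k hk
    · exact le_one'
  have hcover : Set.Icc v 1 ⊆ (⋂ k, (S k)ᶜ) ∪ ⋃ k, {w | w k = v k} := by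
    intro w hw
    by_cases hlt : ∀ k, v k < w k
    · exact Or.inl (Set.mem_iInter.2 fun k => not_le.2 (hlt k))
    · obtain ⟨k, hk⟩ := not_forall.1 hlt
      exact Or.inr (Set.mem_iUnion.2 ⟨k, le_antisymm (not_lt.1 hk) (hw.1 k)⟩)
  have hae : μ.real (Set.Icc v 1) = μ.real (⋂ k, (S k)ᶜ) := by
    refine le_antisymm ?_ (measureReal_mono fun w hw =>
      ⟨fun k => (not_le.1 (show ¬ w k ≤ v k from Set.mem_iInter.1 hw k)).le, fun _ => le_one'⟩)
    calc μ.real (Set.Icc v 1) ≤ μ.real (⋂ k, (S k)ᶜ) + μ.real (⋃ k, {w | w k = v k}) :=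
          (measureReal_mono hcover).trans (measureReal_union_le _ _)
      _ = μ.real (⋂ k, (S k)ᶜ) := by
          rw [measureReal_def _ (⋃ _, _),
            (hμ.hasUniformMarginals hC).measure_iUnion_coord_eq v, ENNReal.toReal_zero, add_zero]
  rw [hae, measureReal_iInter_compl μ hS, survival, nuK, Finset.powerset_univ]
  refine Finset.sum_congr rfl fun L _ => ?_
  rw [hbox, measureReal_def, hμ.2, ENNReal.toReal_ofReal (hC.nonneg_s18 _)]
  congr 2
  ext k
  split_ifs <;> simp_all [cubeSymm]

theorem HasUniformMarginals.exists_Icc_zero_eq_Icc_one {μ : Measure (Cube d)}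
    [IsProbabilityMeasure μ] [NeZero d] (h : HasUniformMarginals μ) {u : Cube d}
    (hu : ∀ k, 0 < u k ∧ u k < 1) (hlow : 0 < μ.real (Set.Icc 0 u))
    (hup : 0 < μ.real (Set.Icc u 1)) :
    ∃ p ∈ Set.Ioc (0 : ℝ) (1 / 2), ∃ a b : Cube d,
      (∀ k, 0 < a k ∧ a k < 1) ∧ (∀ k, 0 < b k ∧ b k < 1) ∧ a ≤ b ∧
        μ.real (Set.Icc 0 a) = p ∧ μ.real (Set.Icc b 1) = p := by
  have hsum : μ.real (Set.Icc 0 u) + μ.real (Set.Icc u 1) ≤ 1 := by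
    have hoverlap : μ (Set.Icc 0 u ∩ Set.Icc u 1) = 0 :=
      measure_mono_null (fun w hw => le_antisymm (hw.1.2 0) (hw.2.1 0))
        (h.measure_coord_eq 0 (u 0))
    rw [← measureReal_union_add_inter measurableSet_Icc, measureReal_def _ (_ ∩ _), hoverlap,
      ENNReal.toReal_zero, add_zero]
    exact measureReal_le_one
  rcases le_total (μ.real (Set.Icc 0 u)) (μ.real (Set.Icc u 1)) with hle | hle
  · obtain ⟨b, hub, hb1, hb⟩ := h.exists_measureReal_Icc_one_eq (fun k => (hu k).2) hlow hle
    exact ⟨_, ⟨hlow, by linarith⟩, u, b, hu, fun k => ⟨(hu k).1.trans_le (hub k), hb1 k⟩, hub,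
      rfl, hb⟩
  · obtain ⟨b, hub, hb1, hb⟩ := h.map_cubeSymm.exists_measureReal_Icc_one_eq (u := cubeSymm u)
      (fun k => by
        rw [cubeSymm, unitInterval.symm_lt_comm, unitInterval.symm_one]; exact (hu k).1) hup
      (by rwa [measureReal_map_cubeSymm_Icc_one, cubeSymm_cubeSymm])
    rw [measureReal_map_cubeSymm_Icc_one] at hb
    refine ⟨_, ⟨hup, by linarith⟩, cubeSymm b, u, fun k => ⟨?_, ?_⟩, hu, cubeSymm_le_iff.2 hub,
      hb, rfl⟩
    · rw [cubeSymm, unitInterval.lt_symm_comm, unitInterval.symm_zero]; exact hb1 k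
    · exact (cubeSymm_le_iff.2 hub k).trans_lt (hu k).2

end Copula

/-- If a copula `C` is not Kendall-countermonotonic, then there exist `p ∈ (0, 1/2]` and
`a ≤ b` in the open cube with `Q^C [0,a] = p = Q^C [b,1]`. -/
theorem stmt18 (d : ℕ) (hd : 2 ≤ d) (C : Cube d → ℝ) (hC : IsCopula C)
    (hnot : ¬ IsTauCM C)
    (μ : Measure (Cube d)) (hμ : IsCopulaMeasure C μ) :
    ∃ p : ℝ, p ∈ Set.Ioc (0 : ℝ) (1 / 2) ∧
      ∃ a b : Cube d, (∀ k, 0 < a k ∧ a k < 1) ∧ (∀ k, 0 < b k ∧ b k < 1) ∧ a ≤ b ∧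
        μ (Set.Icc 0 a) = ENNReal.ofReal p ∧ μ (Set.Icc b 1) = ENNReal.ofReal p := by
  have := hμ.1
  have : NeZero d := ⟨by omega⟩
  obtain ⟨u, hu, hmin⟩ : ∃ u : Cube d, (∀ k, 0 < u k ∧ u k < 1) ∧
      min (C u) (survival C (cubeSymm u)) ≠ 0 := by
    unfold IsTauCM at hnot
    push Not at hnot
    exact hnot
  have hlow : C u = μ.real (Set.Icc 0 u) := by
    rw [measureReal_def, hμ.2, ENNReal.toReal_ofReal (hC.nonneg_s18 u)]
  rw [hμ.survival_cubeSymm_eq hC, hlow] at hmin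
  obtain ⟨p, hp, a, b, ha, hb, hab, hpa, hpb⟩ :=
    (hμ.hasUniformMarginals hC).exists_Icc_zero_eq_Icc_one hu
      (measureReal_nonneg.lt_of_ne fun h0 => hmin (by simp [← h0]))
      (measureReal_nonneg.lt_of_ne fun h0 => hmin (by simp [← h0]))
  exact ⟨p, hp, a, b, ha, hb, hab, by rw [← hpa, ofReal_measureReal],
    by rw [← hpb, ofReal_measureReal]⟩
end
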